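/- arXiv:1208.2158 — 3 statements merged into one kernel-verified Lean document; each statement's English description precedes it below -/
import Mathlib

section
/- Let p > 5 and r_0 > 1. Consider the Banach space V of C^1 functions g on [r_0, ∞) with norm ‖g‖_V = sup_{r ≥ r_0} (|g(r)| r^{p-4} + |g'(r)| r^{p-3}), and the closed ball B = {g ∈ V : ‖g − 1‖_V ≤ 1}. Define the map T(g)(r) = 1 − ∫_r^∞ ∫_s^∞ σ^{-(p-1)} |g(σ)|^{p-1} g(σ) dσ ds. Then for r_0 sufficiently large (depending only on p), T maps B into B and is a contraction on B; in particular T has a unique fixed point in B. -/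
open Set MeasureTheory Filter Topology intervalIntegral

/-- The double-integral map `T` of the fixed point construction of the singular
stationary solution. -/
noncomputable def Tmap (p : ℝ) (g : ℝ → ℝ) (r : ℝ) : ℝ :=
  1 - ∫ s in Set.Ioi r, ∫ σ in Set.Ioi s, σ ^ (-(p - 1)) * |g σ| ^ (p - 1) * g σ

/-- The ball `B` in the space `V`: `C¹` functions `g` on `[r₀,∞)` with
`sup_{r ≥ r₀} (|g(r)-1| r^{p-4} + |g'(r)| r^{p-3}) ≤ 1`. -/
def ballB (p r₀ : ℝ) : Set (ℝ → ℝ) :=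
  {g | ContDiffOn ℝ 1 g (Set.Ici r₀) ∧
    ∀ r, r₀ ≤ r →
      |g r - 1| * r ^ (p - 4) + |derivWithin g (Set.Ici r₀) r| * r ^ (p - 3) ≤ 1}

/-- The `V`-distance of two functions on `[r₀,∞)`. -/
noncomputable def Vdist (p r₀ : ℝ) (g h : ℝ → ℝ) : ℝ :=
  ⨆ r : Set.Ici r₀, (|g r - h r| * (r : ℝ) ^ (p - 4)
    + |derivWithin g (Set.Ici r₀) r - derivWithin h (Set.Ici r₀) r| * (r : ℝ) ^ (p - 3))

namespace Stmt0

lemma phi_deriv (p : ℝ) (hp : 1 < p) (x : ℝ) :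
    HasDerivAt (fun y : ℝ => |y| ^ (p - 1) * y) (p * |x| ^ (p - 1)) x := by
  rcases lt_trichotomy x 0 with hx | hx | hx
  · have h1 : HasDerivAt (fun y : ℝ => -((-y) ^ p)) (p * |x| ^ (p - 1)) x := by
      have h2 : HasDerivAt (fun y : ℝ => (-y) ^ p) (p * (-x) ^ (p - 1) * (-1)) x := by
        exact (Real.hasDerivAt_rpow_const (Or.inl (by linarith : -x ≠ 0))).comp x (hasDerivAt_neg x)
      have := h2.neg
      exact this.congr_deriv (by rw [abs_of_neg hx]; ring)
    refine h1.congr_of_eventuallyEq ?_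
    filter_upwards [eventually_lt_nhds hx] with y hy
    rw [abs_of_neg hy]
    have h3 : (-y) ^ p = (-y) ^ (p - 1) * (-y) := by
      rw [← Real.rpow_add_one (by linarith : -y ≠ 0) (p-1)]; ring_nf
    rw [h3]; ring
  · subst hx
    rw [hasDerivAt_iff_tendsto_slope]
    have habs : |(0:ℝ)| ^ (p-1) = 0 := by
      simp [Real.zero_rpow (by linarith : p - 1 ≠ 0)]
    have h4 : Tendsto (fun y : ℝ => |y| ^ (p - 1)) (𝓝[≠] (0:ℝ)) (𝓝 (p * |(0:ℝ)| ^ (p - 1))) := by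
      rw [habs, mul_zero]
      have h5 : Tendsto (fun y : ℝ => |y| ^ (p - 1)) (𝓝 (0:ℝ)) (𝓝 0) := by
        have := (Real.continuousAt_rpow_const |(0:ℝ)| (p-1) (Or.inr (by linarith))).comp
          continuous_abs.continuousAt
        simpa [Function.comp_def, Real.zero_rpow (by linarith : p - 1 ≠ 0)] using this.tendsto
      exact h5.mono_left nhdsWithin_le_nhds
    refine h4.congr' ?_
    filter_upwards [self_mem_nhdsWithin] with y (hy : y ≠ 0)
    simp only [slope_def_field, Function.comp]
    field_simp
    simp
  · have h1 : HasDerivAt (fun y : ℝ => y ^ p) (p * |x| ^ (p - 1)) x := by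
      have := Real.hasDerivAt_rpow_const (p := p) (Or.inl (ne_of_gt hx))
      rw [abs_of_pos hx]; exact this
    refine h1.congr_of_eventuallyEq ?_
    filter_upwards [eventually_gt_nhds hx] with y hy
    rw [abs_of_pos hy, ← Real.rpow_add_one (ne_of_gt hy) (p-1)]
    ring_nf

lemma phi_lip (p : ℝ) (hp : 1 < p) {a b : ℝ} (ha : |a| ≤ 2) (hb : |b| ≤ 2) :
    abs (|b| ^ (p - 1) * b - |a| ^ (p - 1) * a) ≤ p * 2 ^ (p - 1) * |b - a| := by
  have h := Convex.norm_image_sub_le_of_norm_hasDerivWithin_le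
    (f := fun y : ℝ => |y| ^ (p - 1) * y) (f' := fun x => p * |x| ^ (p - 1))
    (s := Icc (-2 : ℝ) 2) (C := p * 2 ^ (p - 1))
    (fun x _ => (phi_deriv p hp x).hasDerivWithinAt)
    (fun x hx => by
      rw [Real.norm_eq_abs, abs_of_nonneg (by positivity)]
      have : |x| ^ (p - 1) ≤ (2 : ℝ) ^ (p - 1) :=
        Real.rpow_le_rpow (abs_nonneg x) (abs_le.mpr ⟨hx.1, hx.2⟩) (by linarith)
      exact mul_le_mul_of_nonneg_left this (by linarith))
    (convex_Icc _ _) (abs_le.mp ha) (abs_le.mp hb)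
  simpa [Real.norm_eq_abs] using h

lemma split_Ioi (f : ℝ → ℝ) {r₀ s : ℝ} (hs : r₀ ≤ s) (hi : IntegrableOn f (Ioi r₀)) :
    ∫ t in Ioi s, f t = (∫ t in Ioi r₀, f t) - ∫ t in r₀..s, f t := by
  rw [intervalIntegral.integral_of_le hs]
  have h := setIntegral_union (Set.Ioc_disjoint_Ioi le_rfl) measurableSet_Ioi
    (hi.mono_set Set.Ioc_subset_Ioi_self) (hi.mono_set (Set.Ioi_subset_Ioi hs))
    (f := f) (μ := volume)
  rw [Set.Ioc_union_Ioi_eq_Ioi hs] at h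
  rw [h]; ring

lemma primitive_Ioi (f : ℝ → ℝ) {r₀ : ℝ} (hc : ContinuousOn f (Ici r₀))
    (hi : IntegrableOn f (Ioi r₀)) {r : ℝ} (hr : r₀ ≤ r) :
    HasDerivWithinAt (fun x => ∫ t in Ioi x, f t) (-(f r)) (Ici r₀) r := by
  have hii : IntervalIntegrable f volume r₀ r := by
    rw [intervalIntegrable_iff_integrableOn_Ioc_of_le hr]
    exact hi.mono_set Set.Ioc_subset_Ioi_self
  have hprim : HasDerivWithinAt (fun u => ∫ t in r₀..u, f t) (f r) (Ici r₀) r := by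
    rcases eq_or_lt_of_le hr with rfl | hlt
    · exact integral_hasDerivWithinAt_right hii
        ((hc.mono Set.Ioi_subset_Ici_self).stronglyMeasurableAtFilter_nhdsWithin
          measurableSet_Ioi r₀)
        ((hc r₀ Set.self_mem_Ici).mono Set.Ioi_subset_Ici_self)
    · have hca : ContinuousAt f r :=
        (hc r hr).continuousAt (Ici_mem_nhds hlt)
      have hsm : StronglyMeasurableAtFilter f (𝓝 r) volume :=
        (hc.mono (by exact Set.Ioi_subset_Ici_self)).stronglyMeasurableAtFilter isOpen_Ioi r hlt
      exact (integral_hasDerivAt_right hii hsm hca).hasDerivWithinAt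
  have heq : ∀ x ∈ Ici r₀, (∫ t in Ioi x, f t) =
      (∫ t in Ioi r₀, f t) - ∫ t in r₀..x, f t := fun x hx => split_Ioi f hx hi
  have h2 : HasDerivWithinAt (fun u => (∫ t in Ioi r₀, f t) - ∫ t in r₀..u, f t)
      (-(f r)) (Ici r₀) r := hprim.const_sub _
  exact h2.congr heq (heq r hr)


noncomputable def inn (p : ℝ) (g : ℝ → ℝ) (σ : ℝ) : ℝ :=
  σ ^ (-(p - 1)) * |g σ| ^ (p - 1) * g σ

noncomputable def Fi (p : ℝ) (g : ℝ → ℝ) (s : ℝ) : ℝ := ∫ σ in Ioi s, inn p g σ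

lemma Tmap_eq (p : ℝ) (g : ℝ → ℝ) (r : ℝ) :
    Tmap p g r = 1 - ∫ s in Ioi r, Fi p g s := rfl

def Good (p r₀ : ℝ) (g : ℝ → ℝ) : Prop :=
  ContinuousOn g (Ici r₀) ∧ ∀ σ, r₀ ≤ σ → |g σ - 1| * σ ^ (p - 4) ≤ 1

variable {p r₀ : ℝ} {g h : ℝ → ℝ}

lemma one_le_rpow' (hr₀ : 1 < r₀) {σ c : ℝ} (hσ : r₀ ≤ σ) (hc : 0 ≤ c) :
    (1:ℝ) ≤ σ ^ c :=
  Real.one_le_rpow (by linarith) hc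

lemma Good.abs_le_two (hp : 5 < p) (hr₀ : 1 < r₀) (hg : Good p r₀ g)
    {σ : ℝ} (hσ : r₀ ≤ σ) : |g σ| ≤ 2 := by
  have h1 : |g σ - 1| ≤ 1 := by
    have := hg.2 σ hσ
    have h2 : (1:ℝ) ≤ σ ^ (p - 4) := one_le_rpow' hr₀ hσ (by linarith)
    nlinarith [abs_nonneg (g σ - 1)]
  calc |g σ| ≤ |g σ - 1| + 1 := by
        have := abs_sub_abs_le_abs_sub (g σ) 1
        simp only [abs_one] at this; linarith
    _ ≤ 2 := by linarith

lemma weight_le (hr₀ : 1 < r₀) {σ D c : ℝ} (hσ : r₀ ≤ σ)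
    (hb : |g σ - h σ| * σ ^ c ≤ D) : |g σ - h σ| ≤ D * σ ^ (-c) := by
  have hσ0 : (0:ℝ) < σ := by linarith
  have hw : (0:ℝ) < σ ^ c := Real.rpow_pos_of_pos hσ0 c
  rw [Real.rpow_neg hσ0.le, ← div_eq_mul_inv, le_div_iff₀ hw]
  exact hb

lemma Good.inn_bound (hp : 5 < p) (hr₀ : 1 < r₀) (hg : Good p r₀ g)
    {σ : ℝ} (hσ : r₀ ≤ σ) : |inn p g σ| ≤ 2 ^ p * σ ^ (-(p - 1)) := by
  have hσ0 : (0:ℝ) < σ := by linarith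
  have hw : (0:ℝ) < σ ^ (-(p - 1)) := Real.rpow_pos_of_pos hσ0 _
  have h2 : |g σ| ^ (p - 1) ≤ 2 ^ (p - 1) :=
    Real.rpow_le_rpow (abs_nonneg _) (hg.abs_le_two hp hr₀ hσ) (by linarith)
  have h3 : |g σ| ≤ 2 := hg.abs_le_two hp hr₀ hσ
  have h4 : (2:ℝ) ^ (p - 1) * 2 = 2 ^ p := by
    rw [← Real.rpow_add_one (by norm_num : (2:ℝ) ≠ 0) (p - 1)]; ring_nf
  have h5 : |inn p g σ| = σ ^ (-(p - 1)) * |g σ| ^ (p - 1) * |g σ| := by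
    unfold inn
    rw [abs_mul, abs_mul, abs_of_pos hw,
      abs_of_nonneg (Real.rpow_nonneg (abs_nonneg _) _)]
  rw [h5, ← h4]
  have hnn : (0:ℝ) ≤ |g σ| ^ (p - 1) := Real.rpow_nonneg (abs_nonneg _) _
  calc σ ^ (-(p - 1)) * |g σ| ^ (p - 1) * |g σ|
      ≤ σ ^ (-(p - 1)) * (2 ^ (p - 1)) * 2 := by
        apply mul_le_mul (mul_le_mul le_rfl h2 hnn hw.le) h3 (abs_nonneg _)
        positivity
    _ = 2 ^ (p - 1) * 2 * σ ^ (-(p - 1)) := by ring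

lemma Good.inn_continuousOn (hp : 5 < p) (hr₀ : 1 < r₀) (hg : Good p r₀ g) :
    ContinuousOn (inn p g) (Ici r₀) := by
  have h1 : ContinuousOn (fun σ : ℝ => σ ^ (-(p - 1))) (Ici r₀) :=
    ContinuousOn.rpow_const continuousOn_id
      (fun x hx => Or.inl (fun hx0 => by simp only [mem_Ici] at hx; exact absurd hx0 (by linarith)))
  have h2 : ContinuousOn (fun σ : ℝ => |g σ| ^ (p - 1)) (Ici r₀) :=
    ContinuousOn.rpow_const hg.1.abs (fun x _ => Or.inr (by linarith))
  exact (h1.mul h2).mul hg.1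

lemma Good.inn_integrableOn (hp : 5 < p) (hr₀ : 1 < r₀) (hg : Good p r₀ g)
    {s : ℝ} (hs : r₀ ≤ s) : IntegrableOn (inn p g) (Ioi s) := by
  have hs0 : (0:ℝ) < s := by linarith
  have hmaj : IntegrableOn (fun σ : ℝ => 2 ^ p * σ ^ (-(p - 1))) (Ioi s) :=
    (integrableOn_Ioi_rpow_of_lt (by linarith) hs0).const_mul _
  refine hmaj.integrable.mono' ?_ ?_
  · exact ((hg.inn_continuousOn hp hr₀).mono
      (fun x hx => le_trans hs (le_of_lt hx))).aestronglyMeasurable measurableSet_Ioi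
  · refine (ae_restrict_iff' measurableSet_Ioi).mpr (ae_of_all _ fun σ hσ => ?_)
    rw [Real.norm_eq_abs]
    exact hg.inn_bound hp hr₀ (le_trans hs (le_of_lt hσ))

/-- General tail bound. -/
lemma tail_bound {f : ℝ → ℝ} {c a r : ℝ} (ha : a < -1) (hr : 0 < r) (hc : 0 ≤ c)
    (hint : IntegrableOn f (Ioi r))
    (hb : ∀ s ∈ Ioi r, |f s| ≤ c * s ^ a) :
    |∫ s in Ioi r, f s| ≤ c * r ^ (a + 1) / (-(a + 1)) := by
  have hmaj : IntegrableOn (fun s : ℝ => c * s ^ a) (Ioi r) :=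
    (integrableOn_Ioi_rpow_of_lt ha hr).const_mul _
  calc |∫ s in Ioi r, f s| ≤ ∫ s in Ioi r, |f s| := by
        simpa [Real.norm_eq_abs] using norm_integral_le_integral_norm (μ := volume.restrict (Ioi r)) f
    _ ≤ ∫ s in Ioi r, c * s ^ a :=
        setIntegral_mono_on hint.abs hmaj measurableSet_Ioi hb
    _ = c * ∫ s in Ioi r, s ^ a := by rw [MeasureTheory.integral_const_mul]
    _ = c * (-r ^ (a + 1) / (a + 1)) := by rw [integral_Ioi_rpow_of_lt ha hr]
    _ = c * r ^ (a + 1) / (-(a + 1)) := by rw [div_neg]; ring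

lemma Good.Fi_bound (hp : 5 < p) (hr₀ : 1 < r₀) (hg : Good p r₀ g)
    {s : ℝ} (hs : r₀ ≤ s) : |Fi p g s| ≤ 2 ^ p / (p - 2) * s ^ (-(p - 2)) := by
  have hs0 : (0:ℝ) < s := by linarith
  have h := tail_bound (f := inn p g) (c := 2 ^ p) (a := -(p - 1)) (by linarith) hs0
    (by positivity) (hg.inn_integrableOn hp hr₀ hs)
    (fun σ hσ => hg.inn_bound hp hr₀ (le_trans hs (le_of_lt hσ)))
  have he : -(p - 1) + 1 = -(p - 2) := by ring
  rw [he, neg_neg] at h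
  calc |Fi p g s| ≤ 2 ^ p * s ^ (-(p - 2)) / (p - 2) := h
    _ = 2 ^ p / (p - 2) * s ^ (-(p - 2)) := by ring

lemma Good.Fi_hasDeriv (hp : 5 < p) (hr₀ : 1 < r₀) (hg : Good p r₀ g)
    {r : ℝ} (hr : r₀ ≤ r) :
    HasDerivWithinAt (Fi p g) (-(inn p g r)) (Ici r₀) r :=
  primitive_Ioi (inn p g) (hg.inn_continuousOn hp hr₀) (hg.inn_integrableOn hp hr₀ le_rfl) hr

lemma Good.Fi_continuousOn (hp : 5 < p) (hr₀ : 1 < r₀) (hg : Good p r₀ g) :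
    ContinuousOn (Fi p g) (Ici r₀) :=
  fun r hr => (hg.Fi_hasDeriv hp hr₀ hr).continuousWithinAt

lemma Good.Fi_integrableOn (hp : 5 < p) (hr₀ : 1 < r₀) (hg : Good p r₀ g)
    {r : ℝ} (hr : r₀ ≤ r) : IntegrableOn (Fi p g) (Ioi r) := by
  have hr0 : (0:ℝ) < r := by linarith
  have hmaj : IntegrableOn (fun s : ℝ => 2 ^ p / (p - 2) * s ^ (-(p - 2))) (Ioi r) :=
    (integrableOn_Ioi_rpow_of_lt (by linarith) hr0).const_mul _
  refine hmaj.integrable.mono' ?_ ?_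
  · exact ((hg.Fi_continuousOn hp hr₀).mono
      (fun x hx => le_trans hr (le_of_lt hx))).aestronglyMeasurable measurableSet_Ioi
  · refine (ae_restrict_iff' measurableSet_Ioi).mpr (ae_of_all _ fun σ hσ => ?_)
    rw [Real.norm_eq_abs]
    exact hg.Fi_bound hp hr₀ (le_trans hr (le_of_lt hσ))

lemma Good.Tmap_hasDeriv (hp : 5 < p) (hr₀ : 1 < r₀) (hg : Good p r₀ g)
    {r : ℝ} (hr : r₀ ≤ r) :
    HasDerivWithinAt (Tmap p g) (Fi p g r) (Ici r₀) r := by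
  have h := (primitive_Ioi (Fi p g) (hg.Fi_continuousOn hp hr₀)
    (hg.Fi_integrableOn hp hr₀ le_rfl) hr).const_sub 1
  exact h.congr_deriv (neg_neg _)

lemma Good.Tmap_bound (hp : 5 < p) (hr₀ : 1 < r₀) (hg : Good p r₀ g)
    {r : ℝ} (hr : r₀ ≤ r) :
    |Tmap p g r - 1| ≤ 2 ^ p / (p - 2) / (p - 3) * r ^ (-(p - 3)) := by
  have hr0 : (0:ℝ) < r := by linarith
  have h := tail_bound (f := Fi p g) (c := 2 ^ p / (p - 2)) (a := -(p - 2)) (by linarith) hr0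
    (div_nonneg (by positivity) (by linarith)) (hg.Fi_integrableOn hp hr₀ hr)
    (fun σ hσ => hg.Fi_bound hp hr₀ (le_trans hr (le_of_lt hσ)))
  have he : -(p - 2) + 1 = -(p - 3) := by ring
  rw [he, neg_neg] at h
  have heq : |Tmap p g r - 1| = |∫ s in Ioi r, Fi p g s| := by
    rw [Tmap_eq]; rw [abs_sub_comm]; congr 1; ring
  rw [heq]
  calc |∫ s in Ioi r, Fi p g s| ≤ 2 ^ p / (p - 2) * r ^ (-(p - 3)) / (p - 3) := h
    _ = 2 ^ p / (p - 2) / (p - 3) * r ^ (-(p - 3)) := by ring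

lemma Good.inn_sub_bound (hp : 5 < p) (hr₀ : 1 < r₀) (hg : Good p r₀ g)
    (hh : Good p r₀ h) {D : ℝ} (hD0 : 0 ≤ D)
    (hD : ∀ σ, r₀ ≤ σ → |g σ - h σ| ≤ D * σ ^ (-(p - 4)))
    {σ : ℝ} (hσ : r₀ ≤ σ) :
    |inn p g σ - inn p h σ| ≤ p * 2 ^ (p - 1) * D * σ ^ (-(2 * p - 5)) := by
  have hσ0 : (0:ℝ) < σ := by linarith
  have hw : (0:ℝ) < σ ^ (-(p - 1)) := Real.rpow_pos_of_pos hσ0 _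
  have h1 : inn p g σ - inn p h σ
      = σ ^ (-(p - 1)) * (|g σ| ^ (p - 1) * g σ - |h σ| ^ (p - 1) * h σ) := by
    unfold inn; ring
  have h2 : |inn p g σ - inn p h σ|
      = σ ^ (-(p - 1)) * abs (|g σ| ^ (p - 1) * g σ - |h σ| ^ (p - 1) * h σ) := by
    rw [h1, abs_mul, abs_of_pos hw]
  have h3 := phi_lip p (by linarith) (hh.abs_le_two hp hr₀ hσ) (hg.abs_le_two hp hr₀ hσ)
  have h4 : |g σ - h σ| ≤ D * σ ^ (-(p - 4)) := hD σ hσ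
  have h5 : σ ^ (-(p - 1)) * σ ^ (-(p - 4)) = σ ^ (-(2 * p - 5)) := by
    rw [← Real.rpow_add hσ0]; ring_nf
  calc |inn p g σ - inn p h σ|
      = σ ^ (-(p - 1)) * abs (|g σ| ^ (p - 1) * g σ - |h σ| ^ (p - 1) * h σ) := h2
    _ ≤ σ ^ (-(p - 1)) * (p * 2 ^ (p - 1) * |g σ - h σ|) := by
        apply mul_le_mul_of_nonneg_left _ hw.le
        exact h3
    _ ≤ σ ^ (-(p - 1)) * (p * 2 ^ (p - 1) * (D * σ ^ (-(p - 4)))) := by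
        apply mul_le_mul_of_nonneg_left _ hw.le
        apply mul_le_mul_of_nonneg_left h4 (by positivity)
    _ = p * 2 ^ (p - 1) * D * (σ ^ (-(p - 1)) * σ ^ (-(p - 4))) := by ring
    _ = p * 2 ^ (p - 1) * D * σ ^ (-(2 * p - 5)) := by rw [h5]

lemma Good.Fi_sub_bound (hp : 5 < p) (hr₀ : 1 < r₀) (hg : Good p r₀ g)
    (hh : Good p r₀ h) {D : ℝ} (hD0 : 0 ≤ D)
    (hD : ∀ σ, r₀ ≤ σ → |g σ - h σ| ≤ D * σ ^ (-(p - 4)))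
    {s : ℝ} (hs : r₀ ≤ s) :
    |Fi p g s - Fi p h s| ≤ p * 2 ^ (p - 1) * D / (2 * p - 6) * s ^ (-(2 * p - 6)) := by
  have hs0 : (0:ℝ) < s := by linarith
  have hsub : Fi p g s - Fi p h s = ∫ σ in Ioi s, (inn p g σ - inn p h σ) :=
    (integral_sub (hg.inn_integrableOn hp hr₀ hs) (hh.inn_integrableOn hp hr₀ hs)).symm
  have hT := tail_bound (f := fun σ => inn p g σ - inn p h σ)
    (c := p * 2 ^ (p - 1) * D) (a := -(2 * p - 5)) (by linarith) hs0
    (by positivity)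
    ((hg.inn_integrableOn hp hr₀ hs).sub (hh.inn_integrableOn hp hr₀ hs))
    (fun σ hσ => hg.inn_sub_bound hp hr₀ hh hD0 hD (le_trans hs (le_of_lt hσ)))
  have he : -(2 * p - 5) + 1 = -(2 * p - 6) := by ring
  rw [he, neg_neg] at hT
  rw [hsub]
  calc |∫ σ in Ioi s, (inn p g σ - inn p h σ)|
      ≤ p * 2 ^ (p - 1) * D * s ^ (-(2 * p - 6)) / (2 * p - 6) := hT
    _ = p * 2 ^ (p - 1) * D / (2 * p - 6) * s ^ (-(2 * p - 6)) := by ring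

lemma Good.Tmap_sub_bound (hp : 5 < p) (hr₀ : 1 < r₀) (hg : Good p r₀ g)
    (hh : Good p r₀ h) {D : ℝ} (hD0 : 0 ≤ D)
    (hD : ∀ σ, r₀ ≤ σ → |g σ - h σ| ≤ D * σ ^ (-(p - 4)))
    {r : ℝ} (hr : r₀ ≤ r) :
    |Tmap p g r - Tmap p h r|
      ≤ p * 2 ^ (p - 1) * D / (2 * p - 6) / (2 * p - 7) * r ^ (-(2 * p - 7)) := by
  have hr0 : (0:ℝ) < r := by linarith
  have hsub : Tmap p g r - Tmap p h r = -∫ s in Ioi r, (Fi p g s - Fi p h s) := by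
    rw [Tmap_eq, Tmap_eq,
      integral_sub (hg.Fi_integrableOn hp hr₀ hr) (hh.Fi_integrableOn hp hr₀ hr)]
    ring
  have hT := tail_bound (f := fun s => Fi p g s - Fi p h s)
    (c := p * 2 ^ (p - 1) * D / (2 * p - 6)) (a := -(2 * p - 6)) (by linarith) hr0
    (div_nonneg (by positivity) (by linarith))
    ((hg.Fi_integrableOn hp hr₀ hr).sub (hh.Fi_integrableOn hp hr₀ hr))
    (fun s hs => hg.Fi_sub_bound hp hr₀ hh hD0 hD (le_trans hr (le_of_lt hs)))
  have he : -(2 * p - 6) + 1 = -(2 * p - 7) := by ring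
  rw [he, neg_neg] at hT
  rw [hsub, abs_neg]
  calc |∫ s in Ioi r, (Fi p g s - Fi p h s)|
      ≤ p * 2 ^ (p - 1) * D / (2 * p - 6) * r ^ (-(2 * p - 7)) / (2 * p - 7) := hT
    _ = p * 2 ^ (p - 1) * D / (2 * p - 6) / (2 * p - 7) * r ^ (-(2 * p - 7)) := by ring

noncomputable def C1 (p : ℝ) : ℝ := 2 ^ p / (p - 2) / (p - 3) + 2 ^ p / (p - 2)
noncomputable def C2 (p : ℝ) : ℝ :=
  p * 2 ^ (p - 1) / (2 * p - 6) / (2 * p - 7) + p * 2 ^ (p - 1) / (2 * p - 6)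
noncomputable def Rp (p : ℝ) : ℝ := 2 * (C1 p + C2 p) + 2

lemma C1_pos (hp : 5 < p) : 0 < C1 p := by
  unfold C1
  have h1 : (0:ℝ) < 2 ^ p := Real.rpow_pos_of_pos (by norm_num) _
  have : 0 < 2 ^ p / (p - 2) / (p - 3) := by
    apply div_pos (div_pos h1 (by linarith)) (by linarith)
  have : 0 < 2 ^ p / (p - 2) := div_pos h1 (by linarith)
  linarith

lemma C2_pos (hp : 5 < p) : 0 < C2 p := by
  unfold C2
  have h1 : (0:ℝ) < p * 2 ^ (p - 1) := by
    have := Real.rpow_pos_of_pos (show (0:ℝ) < 2 by norm_num) (p - 1)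
    nlinarith
  have h2 : 0 < p * 2 ^ (p - 1) / (2 * p - 6) / (2 * p - 7) :=
    div_pos (div_pos h1 (by linarith)) (by linarith)
  have h3 : 0 < p * 2 ^ (p - 1) / (2 * p - 6) := div_pos h1 (by linarith)
  linarith

lemma Rp_gt_one (hp : 5 < p) : 1 < Rp p := by
  have := C1_pos hp; have := C2_pos hp; unfold Rp; linarith

lemma rpow_mul_rpow {r a b e : ℝ} (hr : 0 < r) (he : a + b = e) :
    r ^ a * r ^ b = r ^ e := by rw [← Real.rpow_add hr, he]

lemma Good.selfmap_est (hp : 5 < p) (hr₀ : 1 < r₀) (hg : Good p r₀ g)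
    {r : ℝ} (hr : r₀ ≤ r) :
    |Tmap p g r - 1| * r ^ (p - 4) + |Fi p g r| * r ^ (p - 3)
      ≤ C1 p * r ^ (-1 : ℝ) := by
  have hr0 : (0:ℝ) < r := by linarith
  have hw4 : (0:ℝ) ≤ r ^ (p - 4) := (Real.rpow_pos_of_pos hr0 _).le
  have hw3 : (0:ℝ) ≤ r ^ (p - 3) := (Real.rpow_pos_of_pos hr0 _).le
  have t1 : |Tmap p g r - 1| * r ^ (p - 4)
      ≤ 2 ^ p / (p - 2) / (p - 3) * r ^ (-1 : ℝ) := by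
    calc |Tmap p g r - 1| * r ^ (p - 4)
        ≤ 2 ^ p / (p - 2) / (p - 3) * r ^ (-(p - 3)) * r ^ (p - 4) :=
          mul_le_mul_of_nonneg_right (hg.Tmap_bound hp hr₀ hr) hw4
      _ = 2 ^ p / (p - 2) / (p - 3) * (r ^ (-(p - 3)) * r ^ (p - 4)) := by ring
      _ = 2 ^ p / (p - 2) / (p - 3) * r ^ (-1 : ℝ) := by
          rw [rpow_mul_rpow hr0 (show -(p - 3) + (p - 4) = (-1:ℝ) by ring)]
  have t2 : |Fi p g r| * r ^ (p - 3) ≤ 2 ^ p / (p - 2) * r ^ (-1 : ℝ) := by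
    calc |Fi p g r| * r ^ (p - 3)
        ≤ 2 ^ p / (p - 2) * r ^ (-(p - 2)) * r ^ (p - 3) :=
          mul_le_mul_of_nonneg_right (hg.Fi_bound hp hr₀ hr) hw3
      _ = 2 ^ p / (p - 2) * (r ^ (-(p - 2)) * r ^ (p - 3)) := by ring
      _ = 2 ^ p / (p - 2) * r ^ (-1 : ℝ) := by
          rw [rpow_mul_rpow hr0 (show -(p - 2) + (p - 3) = (-1:ℝ) by ring)]
  unfold C1; linarith

lemma Good.contr_est (hp : 5 < p) (hr₀ : 1 < r₀) (hg : Good p r₀ g)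
    (hh : Good p r₀ h) {D : ℝ} (hD0 : 0 ≤ D)
    (hD : ∀ σ, r₀ ≤ σ → |g σ - h σ| ≤ D * σ ^ (-(p - 4)))
    {r : ℝ} (hr : r₀ ≤ r) :
    |Tmap p g r - Tmap p h r| * r ^ (p - 4) + |Fi p g r - Fi p h r| * r ^ (p - 3)
      ≤ C2 p * D * r ^ (-(p - 3)) := by
  have hr0 : (0:ℝ) < r := by linarith
  have hw4 : (0:ℝ) ≤ r ^ (p - 4) := (Real.rpow_pos_of_pos hr0 _).le
  have hw3 : (0:ℝ) ≤ r ^ (p - 3) := (Real.rpow_pos_of_pos hr0 _).le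
  have t1 : |Tmap p g r - Tmap p h r| * r ^ (p - 4)
      ≤ p * 2 ^ (p - 1) * D / (2 * p - 6) / (2 * p - 7) * r ^ (-(p - 3)) := by
    calc |Tmap p g r - Tmap p h r| * r ^ (p - 4)
        ≤ p * 2 ^ (p - 1) * D / (2 * p - 6) / (2 * p - 7) * r ^ (-(2 * p - 7)) * r ^ (p - 4) :=
          mul_le_mul_of_nonneg_right (hg.Tmap_sub_bound hp hr₀ hh hD0 hD hr) hw4
      _ = p * 2 ^ (p - 1) * D / (2 * p - 6) / (2 * p - 7)
            * (r ^ (-(2 * p - 7)) * r ^ (p - 4)) := by ring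
      _ = _ := by rw [rpow_mul_rpow hr0 (show -(2 * p - 7) + (p - 4) = -(p - 3) by ring)]
  have t2 : |Fi p g r - Fi p h r| * r ^ (p - 3)
      ≤ p * 2 ^ (p - 1) * D / (2 * p - 6) * r ^ (-(p - 3)) := by
    calc |Fi p g r - Fi p h r| * r ^ (p - 3)
        ≤ p * 2 ^ (p - 1) * D / (2 * p - 6) * r ^ (-(2 * p - 6)) * r ^ (p - 3) :=
          mul_le_mul_of_nonneg_right (hg.Fi_sub_bound hp hr₀ hh hD0 hD hr) hw3
      _ = p * 2 ^ (p - 1) * D / (2 * p - 6) * (r ^ (-(2 * p - 6)) * r ^ (p - 3)) := by ring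
      _ = _ := by rw [rpow_mul_rpow hr0 (show -(2 * p - 6) + (p - 3) = -(p - 3) by ring)]
  have : C2 p * D * r ^ (-(p - 3))
      = p * 2 ^ (p - 1) * D / (2 * p - 6) / (2 * p - 7) * r ^ (-(p - 3))
        + p * 2 ^ (p - 1) * D / (2 * p - 6) * r ^ (-(p - 3)) := by unfold C2; ring
  linarith

lemma rinv_le (hr₀ : 1 < r₀) {r e : ℝ} (hr : r₀ ≤ r) (he : e ≤ -1) :
    r ^ e ≤ r₀ ^ (-1 : ℝ) := by
  have hr1 : (1:ℝ) ≤ r := by linarith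
  calc r ^ e ≤ r ^ (-1 : ℝ) := Real.rpow_le_rpow_of_exponent_le hr1 he
    _ ≤ r₀ ^ (-1 : ℝ) := by
        rw [Real.rpow_neg_one, Real.rpow_neg_one]
        exact inv_anti₀ (by linarith) hr

lemma const_mul_rinv_le (hr₀ : 1 < r₀) {r e C b : ℝ} (hr : r₀ ≤ r) (he : e ≤ -1)
    (hC : 0 ≤ C) (hb : C ≤ b * r₀) (hb0 : 0 < b) : C * r ^ e ≤ b := by
  have h1 : C * r ^ e ≤ C * r₀ ^ (-1 : ℝ) :=
    mul_le_mul_of_nonneg_left (rinv_le hr₀ hr he) hC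
  have h2 : C * r₀ ^ (-1 : ℝ) ≤ b := by
    rw [Real.rpow_neg_one, ← div_eq_mul_inv, div_le_iff₀ (by linarith : (0:ℝ) < r₀)]
    linarith
  linarith

lemma ballB_good (hr₀ : 1 < r₀) (hg : g ∈ ballB p r₀) : Good p r₀ g := by
  refine ⟨hg.1.continuousOn, fun σ hσ => ?_⟩
  have h1 := hg.2 σ hσ
  have h2 : 0 ≤ |derivWithin g (Set.Ici r₀) σ| * σ ^ (p - 3) := by
    have : (0:ℝ) < σ := by linarith
    positivity
  linarith

lemma Good.Tmap_derivWithin (hp : 5 < p) (hr₀ : 1 < r₀) (hg : Good p r₀ g)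
    {r : ℝ} (hr : r₀ ≤ r) :
    derivWithin (Tmap p g) (Set.Ici r₀) r = Fi p g r :=
  (hg.Tmap_hasDeriv hp hr₀ hr).derivWithin (uniqueDiffOn_Ici r₀ r hr)

lemma Good.Tmap_contDiffOn (hp : 5 < p) (hr₀ : 1 < r₀) (hg : Good p r₀ g) :
    ContDiffOn ℝ 1 (Tmap p g) (Set.Ici r₀) := by
  have h := (contDiffOn_succ_iff_derivWithin (n := 0) (uniqueDiffOn_Ici r₀)
    (f := Tmap p g)).mpr
    ⟨fun r hr => ((hg.Tmap_hasDeriv hp hr₀ hr).differentiableWithinAt),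
     by simp,
     by rw [contDiffOn_zero]
        exact (hg.Fi_continuousOn hp hr₀).congr
          (fun r hr => hg.Tmap_derivWithin hp hr₀ hr)⟩
  simpa using h

lemma Good.Tmap_mem_ballB (hp : 5 < p) (hr₀ : 1 < r₀) (hR1 : C1 p ≤ r₀)
    (hg : Good p r₀ g) : Tmap p g ∈ ballB p r₀ := by
  refine ⟨hg.Tmap_contDiffOn hp hr₀, fun r hr => ?_⟩
  rw [hg.Tmap_derivWithin hp hr₀ hr]
  calc |Tmap p g r - 1| * r ^ (p - 4) + |Fi p g r| * r ^ (p - 3)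
      ≤ C1 p * r ^ (-1 : ℝ) := hg.selfmap_est hp hr₀ hr
    _ ≤ 1 := const_mul_rinv_le hr₀ hr le_rfl (le_of_lt (C1_pos hp)) (by linarith) one_pos

lemma C2_half (hp : 5 < p) (hr₀ : 1 < r₀) (hR2 : 2 * C2 p ≤ r₀) {D r : ℝ}
    (hD0 : 0 ≤ D) (hr : r₀ ≤ r) : C2 p * D * r ^ (-(p - 3)) ≤ 1 / 2 * D := by
  rcases eq_or_lt_of_le hD0 with rfl | hD
  · simp
  · exact const_mul_rinv_le hr₀ hr (by linarith)
      (mul_nonneg (C2_pos hp).le hD0) (by nlinarith [C2_pos hp]) (by linarith)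

noncomputable def gu (p : ℝ) (u : BoundedContinuousFunction ℝ ℝ) : ℝ → ℝ :=
  fun r => 1 + u r * r ^ (-(p - 4))

lemma gu_good (hp : 5 < p) (hr₀ : 1 < r₀) (u : BoundedContinuousFunction ℝ ℝ)
    (hu : ‖u‖ ≤ 1) : Good p r₀ (gu p u) := by
  constructor
  · apply continuousOn_const.add
    apply u.continuous.continuousOn.mul
    exact ContinuousOn.rpow_const continuousOn_id
      (fun x hx => Or.inl (fun hx0 => by simp only [mem_Ici] at hx; linarith))
  · intro σ hσ
    have hσ0 : (0:ℝ) < σ := by linarith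
    have h1 : |gu p u σ - 1| * σ ^ (p - 4) = |u σ| := by
      unfold gu
      rw [add_sub_cancel_left, abs_mul,
        abs_of_pos (Real.rpow_pos_of_pos hσ0 (-(p - 4))), mul_assoc,
        rpow_mul_rpow hσ0 (show -(p - 4) + (p - 4) = 0 by ring), Real.rpow_zero, mul_one]
    rw [h1]
    exact (u.norm_coe_le_norm σ).trans hu

lemma gu_sub (hp : 5 < p) (hr₀ : 1 < r₀) (u v : BoundedContinuousFunction ℝ ℝ)
    {σ : ℝ} (hσ : r₀ ≤ σ) :
    |gu p u σ - gu p v σ| ≤ dist u v * σ ^ (-(p - 4)) := by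
  have hσ0 : (0:ℝ) < σ := by linarith
  have h1 : gu p u σ - gu p v σ = (u σ - v σ) * σ ^ (-(p - 4)) := by unfold gu; ring
  rw [h1, abs_mul, abs_of_pos (Real.rpow_pos_of_pos hσ0 _)]
  apply mul_le_mul_of_nonneg_right _ (Real.rpow_pos_of_pos hσ0 _).le
  rw [← Real.dist_eq]
  exact u.dist_coe_le_dist σ

noncomputable def TbFun (p r₀ : ℝ) (u : BoundedContinuousFunction ℝ ℝ) : ℝ → ℝ :=
  fun x => (Tmap p (gu p u) (max x r₀) - 1) * (max x r₀) ^ (p - 4)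

lemma TbFun_cont (hp : 5 < p) (hr₀ : 1 < r₀) (u : BoundedContinuousFunction ℝ ℝ)
    (hu : ‖u‖ ≤ 1) : Continuous (TbFun p r₀ u) := by
  have hGood := gu_good hp hr₀ u hu
  have hf : ContinuousOn (fun t => (Tmap p (gu p u) t - 1) * t ^ (p - 4)) (Ici r₀) := by
    apply ContinuousOn.mul
    · exact ContinuousOn.sub
        (fun r hr => (hGood.Tmap_hasDeriv hp hr₀ hr).continuousWithinAt) continuousOn_const
    · exact ContinuousOn.rpow_const continuousOn_id
        (fun x hx => Or.inl (fun hx0 => by simp only [mem_Ici] at hx; linarith))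
  exact hf.comp_continuous (continuous_id.max continuous_const)
    (fun x => mem_Ici.mpr (le_max_right x r₀))

lemma TbFun_bound (hp : 5 < p) (hr₀ : 1 < r₀) (hR1 : C1 p ≤ r₀)
    (u : BoundedContinuousFunction ℝ ℝ) (hu : ‖u‖ ≤ 1) (x : ℝ) :
    ‖TbFun p r₀ u x‖ ≤ 1 := by
  have hGood := gu_good hp hr₀ u hu
  set t := max x r₀ with ht
  have htr : r₀ ≤ t := le_max_right x r₀
  have ht0 : (0:ℝ) < t := by linarith
  have hest := hGood.selfmap_est hp hr₀ htr
  have h2 : (0:ℝ) ≤ |Fi p (gu p u) t| * t ^ (p - 3) := by positivity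
  have h3 : C1 p * t ^ (-1:ℝ) ≤ 1 :=
    const_mul_rinv_le hr₀ htr le_rfl (C1_pos hp).le (by linarith) one_pos
  have h4 : ‖TbFun p r₀ u x‖ = |Tmap p (gu p u) t - 1| * t ^ (p - 4) := by
    rw [Real.norm_eq_abs]
    unfold TbFun
    rw [abs_mul, abs_of_pos (Real.rpow_pos_of_pos ht0 _)]
  rw [h4]; linarith

noncomputable def Tb (p r₀ : ℝ) (hp : 5 < p) (hr₀ : 1 < r₀) (hR1 : C1 p ≤ r₀)
    (u : {u : BoundedContinuousFunction ℝ ℝ // ‖u‖ ≤ 1}) :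
    {u : BoundedContinuousFunction ℝ ℝ // ‖u‖ ≤ 1} :=
  ⟨BoundedContinuousFunction.ofNormedAddCommGroup (TbFun p r₀ u.1)
      (TbFun_cont hp hr₀ u.1 u.2) 1 (TbFun_bound hp hr₀ hR1 u.1 u.2),
    BoundedContinuousFunction.norm_ofNormedAddCommGroup_le _ zero_le_one _⟩

lemma Tb_lip (hp : 5 < p) (hr₀ : 1 < r₀) (hR1 : C1 p ≤ r₀) (hR2 : 2 * C2 p ≤ r₀)
    (u v : {u : BoundedContinuousFunction ℝ ℝ // ‖u‖ ≤ 1}) :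
    dist (Tb p r₀ hp hr₀ hR1 u) (Tb p r₀ hp hr₀ hR1 v) ≤ 1 / 2 * dist u v := by
  have hGu := gu_good hp hr₀ u.1 u.2
  have hGv := gu_good hp hr₀ v.1 v.2
  have hD0 : (0:ℝ) ≤ dist u.1 v.1 := dist_nonneg
  rw [Subtype.dist_eq]
  refine (BoundedContinuousFunction.dist_le (by positivity)).mpr fun x => ?_
  set t := max x r₀ with ht
  have htr : r₀ ≤ t := le_max_right x r₀
  have ht0 : (0:ℝ) < t := by linarith
  have hcontr := hGu.contr_est hp hr₀ hGv hD0
    (fun σ hσ => gu_sub hp hr₀ u.1 v.1 hσ) htr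
  have h2 : (0:ℝ) ≤ |Fi p (gu p u.1) t - Fi p (gu p v.1) t| * t ^ (p - 3) := by positivity
  have h3 := C2_half hp hr₀ hR2 hD0 htr
  have h4 : dist (((Tb p r₀ hp hr₀ hR1 u).1 : ℝ → ℝ) x) (((Tb p r₀ hp hr₀ hR1 v).1 : ℝ → ℝ) x)
      = |Tmap p (gu p u.1) t - Tmap p (gu p v.1) t| * t ^ (p - 4) := by
    show dist (TbFun p r₀ u.1 x) (TbFun p r₀ v.1 x) = _
    rw [Real.dist_eq,
      show TbFun p r₀ u.1 x - TbFun p r₀ v.1 x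
        = (Tmap p (gu p u.1) t - Tmap p (gu p v.1) t) * t ^ (p - 4) from by unfold TbFun; ring,
      abs_mul, abs_of_pos (Real.rpow_pos_of_pos ht0 _)]
  rw [Subtype.dist_eq u v, h4]
  linarith

end Stmt0

open Stmt0

/-- for `r₀` large enough (depending only on `p > 5`), `T` maps `B` into
`B`, is a contraction on `B` in the `V`-norm, and has a unique fixed point in `B`. -/
theorem stmt_0 (p : ℝ) (hp : 5 < p) :
    ∃ R : ℝ, 1 < R ∧ ∀ r₀ : ℝ, R ≤ r₀ →
      (∀ g ∈ ballB p r₀, Tmap p g ∈ ballB p r₀) ∧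
      (∃ k : ℝ, 0 ≤ k ∧ k < 1 ∧ ∀ g ∈ ballB p r₀, ∀ h ∈ ballB p r₀,
        Vdist p r₀ (Tmap p g) (Tmap p h) ≤ k * Vdist p r₀ g h) ∧
      (∃ g ∈ ballB p r₀, (∀ r, r₀ ≤ r → Tmap p g r = g r) ∧
        ∀ h ∈ ballB p r₀, (∀ r, r₀ ≤ r → Tmap p h r = h r) →
          ∀ r, r₀ ≤ r → h r = g r) := by
  refine ⟨Rp p, Rp_gt_one hp, fun r₀ hR => ?_⟩
  have hC1 := C1_pos hp
  have hC2 := C2_pos hp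
  have hRp : Rp p = 2 * (C1 p + C2 p) + 2 := rfl
  have hr₀ : 1 < r₀ := lt_of_lt_of_le (Rp_gt_one hp) hR
  have hR1 : C1 p ≤ r₀ := by rw [hRp] at hR; linarith
  have hR2 : 2 * C2 p ≤ r₀ := by rw [hRp] at hR; linarith
  haveI : Nonempty ↥(Set.Ici r₀) := ⟨⟨r₀, Set.self_mem_Ici⟩⟩
  -- pointwise facts for pairs in the ball
  have bddV : ∀ g ∈ ballB p r₀, ∀ h ∈ ballB p r₀, BddAbove (Set.range fun r : Set.Ici r₀ =>
      |g r - h r| * (r : ℝ) ^ (p - 4)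
        + |derivWithin g (Set.Ici r₀) r - derivWithin h (Set.Ici r₀) r| * (r : ℝ) ^ (p - 3)) := by
    intro g hg h hh
    refine ⟨2, ?_⟩
    rintro x ⟨⟨r, hr⟩, rfl⟩
    simp only [mem_Ici] at hr
    have h1 := hg.2 r hr
    have h2 := hh.2 r hr
    have hr0 : (0:ℝ) < r := by linarith
    have hw4 : (0:ℝ) ≤ r ^ (p - 4) := (Real.rpow_pos_of_pos hr0 _).le
    have hw3 : (0:ℝ) ≤ r ^ (p - 3) := (Real.rpow_pos_of_pos hr0 _).le
    have e1 : |g r - h r| ≤ |g r - 1| + |h r - 1| := by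
      have := abs_sub_le (g r) 1 (h r)
      rwa [abs_sub_comm 1 (h r)] at this
    have e2 : |derivWithin g (Set.Ici r₀) r - derivWithin h (Set.Ici r₀) r|
        ≤ |derivWithin g (Set.Ici r₀) r| + |derivWithin h (Set.Ici r₀) r| := abs_sub _ _
    have := mul_le_mul_of_nonneg_right e1 hw4
    have := mul_le_mul_of_nonneg_right e2 hw3
    simp only
    nlinarith
  have hVpt : ∀ g ∈ ballB p r₀, ∀ h ∈ ballB p r₀, ∀ σ, r₀ ≤ σ →
      |g σ - h σ| ≤ Vdist p r₀ g h * σ ^ (-(p - 4)) := by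
    intro g hg h hh σ hσ
    refine weight_le hr₀ hσ ?_
    have hle := le_ciSup (bddV g hg h hh) (⟨σ, hσ⟩ : Set.Ici r₀)
    have hnn : (0:ℝ) ≤ |derivWithin g (Set.Ici r₀) σ - derivWithin h (Set.Ici r₀) σ|
        * σ ^ (p - 3) := by
      have : (0:ℝ) < σ := by linarith
      positivity
    calc |g σ - h σ| * σ ^ (p - 4)
        ≤ |g σ - h σ| * σ ^ (p - 4)
          + |derivWithin g (Set.Ici r₀) σ - derivWithin h (Set.Ici r₀) σ| * σ ^ (p - 3) := by
          linarith
      _ ≤ Vdist p r₀ g h := hle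
  have hV0 : ∀ g ∈ ballB p r₀, ∀ h ∈ ballB p r₀, 0 ≤ Vdist p r₀ g h := by
    intro g hg h hh
    have hle := le_ciSup (bddV g hg h hh) (⟨r₀, Set.self_mem_Ici⟩ : Set.Ici r₀)
    refine le_trans ?_ hle
    have : (0:ℝ) < r₀ := by linarith
    positivity
  refine ⟨fun g hg => (ballB_good hr₀ hg).Tmap_mem_ballB hp hr₀ hR1, ?_, ?_⟩
  · -- contraction
    refine ⟨1/2, by norm_num, by norm_num, fun g hg h hh => ?_⟩
    have hGg := ballB_good hr₀ hg
    have hGh := ballB_good hr₀ hh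
    have hD0 := hV0 g hg h hh
    unfold Vdist
    refine ciSup_le fun ⟨r, hr⟩ => ?_
    simp only [mem_Ici] at hr
    simp only
    rw [hGg.Tmap_derivWithin hp hr₀ hr, hGh.Tmap_derivWithin hp hr₀ hr]
    calc |Tmap p g r - Tmap p h r| * r ^ (p - 4) + |Fi p g r - Fi p h r| * r ^ (p - 3)
        ≤ C2 p * Vdist p r₀ g h * r ^ (-(p - 3)) :=
          hGg.contr_est hp hr₀ hGh hD0 (hVpt g hg h hh) hr
      _ ≤ 1 / 2 * Vdist p r₀ g h := C2_half hp hr₀ hR2 hD0 hr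
  · -- fixed point
    haveI : CompleteSpace {u : BoundedContinuousFunction ℝ ℝ // ‖u‖ ≤ 1} := by
      have hclosed : IsClosed {u : BoundedContinuousFunction ℝ ℝ | ‖u‖ ≤ 1} :=
        isClosed_le continuous_norm continuous_const
      exact hclosed.completeSpace_coe
    haveI : Nonempty {u : BoundedContinuousFunction ℝ ℝ // ‖u‖ ≤ 1} :=
      ⟨⟨0, by simp⟩⟩
    have hcontr : ContractingWith (1/2 : NNReal) (Tb p r₀ hp hr₀ hR1) := by
      constructor
      · rw [← NNReal.coe_lt_coe]; norm_num
      · refine LipschitzWith.of_dist_le_mul fun u v => ?_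
        have := Tb_lip hp hr₀ hR1 hR2 u v
        calc dist (Tb p r₀ hp hr₀ hR1 u) (Tb p r₀ hp hr₀ hR1 v)
            ≤ 1 / 2 * dist u v := this
          _ = ((1/2 : NNReal) : ℝ) * dist u v := by norm_num
    set u := ContractingWith.fixedPoint (Tb p r₀ hp hr₀ hR1) hcontr with hu
    have hfixu : Tb p r₀ hp hr₀ hR1 u = u := hcontr.fixedPoint_isFixedPt
    set G : ℝ → ℝ := gu p u.1 with hG
    have hGood : Good p r₀ G := gu_good hp hr₀ u.1 u.2
    have hpt : ∀ x : ℝ, TbFun p r₀ u.1 x = u.1 x := by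
      intro x
      have h0 := congrArg Subtype.val hfixu
      calc TbFun p r₀ u.1 x = ((Tb p r₀ hp hr₀ hR1 u).1 : ℝ → ℝ) x := rfl
        _ = u.1 x := by rw [h0]
    have geq : ∀ r, r₀ ≤ r → Tmap p G r = G r := by
      intro r hr
      have hr0 : (0:ℝ) < r := by linarith
      have h1 := hpt r
      rw [TbFun, max_eq_left hr] at h1
      show Tmap p G r = 1 + u.1 r * r ^ (-(p - 4))
      rw [← h1, mul_assoc,
        rpow_mul_rpow hr0 (show (p - 4) + -(p - 4) = 0 by ring), Real.rpow_zero, mul_one]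
      ring
    have hTmem : Tmap p G ∈ ballB p r₀ := hGood.Tmap_mem_ballB hp hr₀ hR1
    have hGmem : G ∈ ballB p r₀ := by
      refine ⟨hTmem.1.congr (fun x hx => (geq x hx).symm), fun r hr => ?_⟩
      have hd : derivWithin G (Set.Ici r₀) r = derivWithin (Tmap p G) (Set.Ici r₀) r :=
        derivWithin_congr (fun x hx => (geq x hx).symm) ((geq r hr).symm)
      rw [hd, ← geq r hr]
      exact hTmem.2 r hr
    refine ⟨G, hGmem, geq, fun h hh hfixh r hr => ?_⟩
    have bdd : BddAbove (Set.range fun σ : Set.Ici r₀ => |h σ - G σ| * (σ:ℝ) ^ (p - 4)) := by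
      refine ⟨2, ?_⟩
      rintro x ⟨⟨σ, hσ⟩, rfl⟩
      simp only [mem_Ici] at hσ
      have hσ0 : (0:ℝ) < σ := by linarith
      have h1 := hh.2 σ hσ
      have h2 := hGmem.2 σ hσ
      have hw4 : (0:ℝ) ≤ σ ^ (p - 4) := (Real.rpow_pos_of_pos hσ0 _).le
      have e1 : |h σ - G σ| ≤ |h σ - 1| + |G σ - 1| := by
        have := abs_sub_le (h σ) 1 (G σ)
        rwa [abs_sub_comm 1 (G σ)] at this
      have e2 := mul_le_mul_of_nonneg_right e1 hw4
      have e3 : (0:ℝ) ≤ |derivWithin h (Set.Ici r₀) σ| * σ ^ (p - 3) := by positivity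
      have e4 : (0:ℝ) ≤ |derivWithin G (Set.Ici r₀) σ| * σ ^ (p - 3) := by positivity
      simp only
      nlinarith
    set D := ⨆ σ : Set.Ici r₀, |h σ - G σ| * (σ:ℝ) ^ (p - 4) with hD
    have hD0 : 0 ≤ D := by
      refine le_trans ?_ (le_ciSup bdd (⟨r₀, Set.self_mem_Ici⟩ : Set.Ici r₀))
      have : (0:ℝ) < r₀ := by linarith
      positivity
    have hpt2 : ∀ σ, r₀ ≤ σ → |h σ - G σ| ≤ D * σ ^ (-(p - 4)) := fun σ hσ =>
      weight_le hr₀ hσ (le_ciSup bdd (⟨σ, hσ⟩ : Set.Ici r₀))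
    have hstep : D ≤ 1 / 2 * D := by
      rw [hD]
      refine ciSup_le fun ⟨σ, hσ⟩ => ?_
      simp only [mem_Ici] at hσ
      simp only
      have hcon := (ballB_good hr₀ hh).contr_est hp hr₀ hGood hD0 hpt2 hσ
      have h2 : (0:ℝ) ≤ |Fi p h σ - Fi p G σ| * σ ^ (p - 3) := by
        have : (0:ℝ) < σ := by linarith
        positivity
      have h3 := C2_half hp hr₀ hR2 hD0 hσ
      calc |h σ - G σ| * σ ^ (p - 4) = |Tmap p h σ - Tmap p G σ| * σ ^ (p - 4) := by
            rw [hfixh σ hσ, geq σ hσ]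
        _ ≤ 1 / 2 * D := by linarith
    have hDle : D ≤ 0 := by linarith
    have h4 : |h r - G r| * r ^ (p - 4) ≤ 0 :=
      le_trans (le_ciSup bdd (⟨r, hr⟩ : Set.Ici r₀)) hDle
    have hw : (0:ℝ) < r ^ (p - 4) := Real.rpow_pos_of_pos (by linarith) _
    have h5 : |h r - G r| ≤ 0 := by nlinarith [abs_nonneg (h r - G r)]
    exact sub_eq_zero.mp (abs_eq_zero.mp (le_antisymm h5 (abs_nonneg _)))
end

section
/- Let H_0 : [r_1, ∞) → ℝ be absolutely continuous with H_0(r) → 0 as r → ∞, and suppose for every s ≥ r_1: ∫_s^∞ (H_0'(r))^2 dr ≤ (1/(16 s)) H_0(s)^2. Then |H_0(2^{n+1} r_1)| ≥ (3/4) |H_0(2^n r_1)| for all n ≥ 0, and hence |H_0(2^n r_1)| ≥ (3/4)^n |H_0(r_1)|. If moreover |H_0(r)| ≤ C r^{-2} for all r ≥ r_1, then H_0(r_1) = 0 and consequently H_0 ≡ 0 on [r_1, ∞). -/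
open Set Filter MeasureTheory

/-- Cauchy–Schwarz key estimate: `|H₀ b - H₀ a| ≤ √(b-a) · √(∫_{Ioi a} H₀'²)`. -/
lemma stmt9_key (r₁ : ℝ) (H₀ H₀' : ℝ → ℝ)
    (hderiv : ∀ r, r₁ ≤ r → HasDerivAt H₀ (H₀' r) r)
    (hint : IntegrableOn (fun r => (H₀' r) ^ 2) (Set.Ioi r₁))
    {a b : ℝ} (ha : r₁ ≤ a) (hab : a ≤ b) :
    |H₀ b - H₀ a| ≤ Real.sqrt (b - a) * Real.sqrt (∫ r in Set.Ioi a, (H₀' r) ^ 2) := by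
  have hsub : Set.Ioc a b ⊆ Set.Ioi r₁ := fun x hx => lt_of_le_of_lt ha hx.1
  have hIoi : Set.Ioi a ⊆ Set.Ioi r₁ := Set.Ioi_subset_Ioi ha
  have hmeas : AEStronglyMeasurable H₀' (volume.restrict (Set.Ioc a b)) := by
    refine ((measurable_deriv H₀).aestronglyMeasurable).congr ?_
    refine ae_restrict_of_forall_mem measurableSet_Ioc fun x hx => ?_
    exact (hderiv x (ha.trans hx.1.le)).deriv
  have hsq : IntegrableOn (fun r => (H₀' r) ^ 2) (Set.Ioc a b) := hint.mono_set hsub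
  have hL2 : MemLp H₀' 2 (volume.restrict (Set.Ioc a b)) :=
    (memLp_two_iff_integrable_sq hmeas).2 hsq
  haveI : IsFiniteMeasure (volume.restrict (Set.Ioc a b)) :=
    ⟨by rw [Measure.restrict_apply_univ]; exact measure_Ioc_lt_top⟩
  have hInt : IntegrableOn H₀' (Set.Ioc a b) := hL2.integrable one_le_two
  have hII : IntervalIntegrable H₀' volume a b := by
    rw [intervalIntegrable_iff, Set.uIoc_of_le hab]; exact hInt
  have hftc : ∫ x in a..b, H₀' x = H₀ b - H₀ a := by
    refine intervalIntegral.integral_eq_sub_of_hasDerivAt (fun x hx => ?_) hII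
    rw [Set.uIcc_of_le hab] at hx
    exact hderiv x (ha.trans hx.1)
  have h1 : |H₀ b - H₀ a| ≤ ∫ x in Set.Ioc a b, |H₀' x| := by
    rw [← hftc, intervalIntegral.integral_of_le hab]
    simpa [Real.norm_eq_abs] using
      norm_integral_le_integral_norm (μ := volume.restrict (Set.Ioc a b)) H₀'
  -- Hölder with p = q = 2
  have hconj : Real.HolderConjugate 2 2 := Real.HolderConjugate.two_two
  have habs : MemLp (fun x => |H₀' x|) (ENNReal.ofReal 2) (volume.restrict (Set.Ioc a b)) := by
    rw [ENNReal.ofReal_ofNat]; exact hL2.abs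
  have hone : MemLp (fun _ : ℝ => (1 : ℝ)) (ENNReal.ofReal 2) (volume.restrict (Set.Ioc a b)) :=
    memLp_const 1
  have h2 := integral_mul_le_Lp_mul_Lq_of_nonneg hconj
    (f := fun x => |H₀' x|) (g := fun _ => (1 : ℝ))
    (Eventually.of_forall fun x => abs_nonneg _) (Eventually.of_forall fun _ => zero_le_one)
    habs hone
  simp only [mul_one] at h2
  have hvol : ∫ _x in Set.Ioc a b, (1 : ℝ) = b - a := by
    simp [Real.volume_Ioc, ENNReal.toReal_ofReal (sub_nonneg.2 hab), hab]
  have hsq_eq : ∀ x : ℝ, |H₀' x| ^ (2 : ℝ) = (H₀' x) ^ 2 := by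
    intro x
    rw [show (2 : ℝ) = ((2 : ℕ) : ℝ) by norm_num, Real.rpow_natCast, sq_abs]
  have hone_eq : ∀ x : ℝ, (1 : ℝ) ^ (2 : ℝ) = (1 : ℝ) := fun _ => Real.one_rpow _
  rw [show (∫ x in Set.Ioc a b, |H₀' x| ^ (2 : ℝ)) = ∫ x in Set.Ioc a b, (H₀' x) ^ 2 by
        exact integral_congr_ae (Eventually.of_forall fun x => hsq_eq x),
      show (∫ _x in Set.Ioc a b, (1 : ℝ) ^ (2 : ℝ)) = ∫ _x in Set.Ioc a b, (1 : ℝ) by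
        exact integral_congr_ae (Eventually.of_forall fun x => hone_eq x),
      hvol] at h2
  have hIocle : (∫ x in Set.Ioc a b, (H₀' x) ^ 2) ≤ ∫ r in Set.Ioi a, (H₀' r) ^ 2 := by
    refine setIntegral_mono_set (hint.mono_set hIoi)
      (Eventually.of_forall fun x => sq_nonneg _) ?_
    exact HasSubset.Subset.eventuallyLE Set.Ioc_subset_Ioi_self
  have hnn : (0 : ℝ) ≤ ∫ x in Set.Ioc a b, (H₀' x) ^ 2 :=
    setIntegral_nonneg measurableSet_Ioc fun x _ => sq_nonneg _
  have h3 : (∫ x in Set.Ioc a b, (H₀' x) ^ 2) ^ ((1 : ℝ) / 2)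
      ≤ (∫ r in Set.Ioi a, (H₀' r) ^ 2) ^ ((1 : ℝ) / 2) :=
    Real.rpow_le_rpow hnn hIocle (by norm_num)
  calc |H₀ b - H₀ a| ≤ ∫ x in Set.Ioc a b, |H₀' x| := h1
    _ ≤ (∫ x in Set.Ioc a b, (H₀' x) ^ 2) ^ ((1 : ℝ) / 2) * (b - a) ^ ((1 : ℝ) / 2) := h2
    _ ≤ (∫ r in Set.Ioi a, (H₀' r) ^ 2) ^ ((1 : ℝ) / 2) * (b - a) ^ ((1 : ℝ) / 2) := by
        gcongr
    _ = Real.sqrt (b - a) * Real.sqrt (∫ r in Set.Ioi a, (H₀' r) ^ 2) := by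
        rw [Real.sqrt_eq_rpow, Real.sqrt_eq_rpow, mul_comm]

/-- if `∫_s^∞ (H₀')² ≤ H₀(s)²/(16s)` for all `s ≥ r₁` and `H₀ → 0` at
infinity, then `|H₀(2^{n+1}r₁)| ≥ (3/4)|H₀(2^n r₁)|`, hence
`|H₀(2^n r₁)| ≥ (3/4)^n |H₀(r₁)|`; if moreover `|H₀(r)| ≤ C r^{-2}` then `H₀ ≡ 0`
on `[r₁,∞)`. -/
theorem stmt_9 (r₁ : ℝ) (hr₁ : 0 < r₁) (H₀ H₀' : ℝ → ℝ)
    (hderiv : ∀ r, r₁ ≤ r → HasDerivAt H₀ (H₀' r) r)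
    (hint : IntegrableOn (fun r => (H₀' r) ^ 2) (Set.Ioi r₁))
    (hlim : Tendsto H₀ atTop (nhds 0))
    (hsmall : ∀ s, r₁ ≤ s →
      ∫ r in Set.Ioi s, (H₀' r) ^ 2 ≤ 1 / (16 * s) * (H₀ s) ^ 2) :
    (∀ n : ℕ, |H₀ ((2 : ℝ) ^ (n + 1) * r₁)| ≥ (3 / 4) * |H₀ ((2 : ℝ) ^ n * r₁)|) ∧
    (∀ n : ℕ, |H₀ ((2 : ℝ) ^ n * r₁)| ≥ (3 / 4 : ℝ) ^ n * |H₀ r₁|) ∧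
    (∀ C : ℝ, (∀ r, r₁ ≤ r → |H₀ r| ≤ C / r ^ 2) → ∀ r, r₁ ≤ r → H₀ r = 0) := by
  -- main step: for a ≥ r₁, |H₀(2a) - H₀(a)| ≤ |H₀ a| / 4
  have hstep : ∀ a : ℝ, r₁ ≤ a → |H₀ (2 * a) - H₀ a| ≤ |H₀ a| / 4 := by
    intro a ha
    have ha0 : 0 < a := lt_of_lt_of_le hr₁ ha
    have hnn : (0 : ℝ) ≤ ∫ r in Set.Ioi a, (H₀' r) ^ 2 :=
      setIntegral_nonneg measurableSet_Ioi fun x _ => sq_nonneg _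
    have h1 := stmt9_key r₁ H₀ H₀' hderiv hint ha (by linarith : a ≤ 2 * a)
    have h2 : Real.sqrt (∫ r in Set.Ioi a, (H₀' r) ^ 2)
        ≤ Real.sqrt (1 / (16 * a) * (H₀ a) ^ 2) :=
      Real.sqrt_le_sqrt (hsmall a ha)
    have h3 : Real.sqrt (2 * a - a) * Real.sqrt (1 / (16 * a) * (H₀ a) ^ 2)
        = |H₀ a| / 4 := by
      rw [show (2 : ℝ) * a - a = a by ring, ← Real.sqrt_mul ha0.le]
      rw [show a * (1 / (16 * a) * (H₀ a) ^ 2) = (H₀ a / 4) ^ 2 by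
        field_simp; ring]
      rw [Real.sqrt_sq_eq_abs, abs_div]
      norm_num
    calc |H₀ (2 * a) - H₀ a|
        ≤ Real.sqrt (2 * a - a) * Real.sqrt (∫ r in Set.Ioi a, (H₀' r) ^ 2) := h1
      _ ≤ Real.sqrt (2 * a - a) * Real.sqrt (1 / (16 * a) * (H₀ a) ^ 2) := by
          gcongr
      _ = |H₀ a| / 4 := h3
  have part1 : ∀ n : ℕ, |H₀ ((2 : ℝ) ^ (n + 1) * r₁)| ≥ (3 / 4) * |H₀ ((2 : ℝ) ^ n * r₁)| := by
    intro n
    set a := (2 : ℝ) ^ n * r₁ with ha_def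
    have ha : r₁ ≤ a := by
      rw [ha_def]
      nlinarith [one_le_pow₀ (n := n) (by norm_num : (1:ℝ) ≤ 2)]
    have h2a : (2 : ℝ) ^ (n + 1) * r₁ = 2 * a := by rw [ha_def]; ring
    have := hstep a ha
    have htri : |H₀ a| - |H₀ (2 * a)| ≤ |H₀ (2 * a) - H₀ a| := by
      have := abs_sub_abs_le_abs_sub (H₀ a) (H₀ (2 * a))
      rwa [abs_sub_comm] at this
    rw [h2a]
    linarith
  have part2 : ∀ n : ℕ, |H₀ ((2 : ℝ) ^ n * r₁)| ≥ (3 / 4 : ℝ) ^ n * |H₀ r₁| := by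
    intro n
    induction n with
    | zero => simp
    | succ n ih =>
        have := part1 n
        calc |H₀ ((2 : ℝ) ^ (n + 1) * r₁)| ≥ (3 / 4) * |H₀ ((2 : ℝ) ^ n * r₁)| := this
          _ ≥ (3 / 4) * ((3 / 4 : ℝ) ^ n * |H₀ r₁|) := by nlinarith [ih]
          _ = (3 / 4 : ℝ) ^ (n + 1) * |H₀ r₁| := by ring
  refine ⟨part1, part2, ?_⟩
  intro C hC r hr
  -- first: H₀ r₁ = 0
  have hzero : H₀ r₁ = 0 := by
    by_contra hne
    have hpos : 0 < |H₀ r₁| := abs_pos.2 hne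
    have hbound : ∀ n : ℕ, |H₀ r₁| ≤ C / r₁ ^ 2 * (1 / 3 : ℝ) ^ n := by
      intro n
      have h2n : (1 : ℝ) ≤ (2 : ℝ) ^ n := one_le_pow₀ (n := n) (by norm_num : (1:ℝ) ≤ 2)
      have harg : r₁ ≤ (2 : ℝ) ^ n * r₁ := by nlinarith
      have h1 := part2 n
      have h2 := hC ((2 : ℝ) ^ n * r₁) harg
      have h3 : (3 / 4 : ℝ) ^ n * |H₀ r₁| ≤ C / ((2 : ℝ) ^ n * r₁) ^ 2 := le_trans h1 h2
      have h4 : ((2 : ℝ) ^ n * r₁) ^ 2 = (4 : ℝ) ^ n * r₁ ^ 2 := by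
        rw [mul_pow, ← pow_mul, show n * 2 = 2 * n from Nat.mul_comm n 2, pow_mul]
        norm_num
      rw [h4] at h3
      have h34 : (0 : ℝ) < (3 / 4 : ℝ) ^ n := pow_pos (by norm_num) n
      have h4n : (0 : ℝ) < (4 : ℝ) ^ n := pow_pos (by norm_num) n
      have key : (3 / 4 : ℝ) ^ n * (4 : ℝ) ^ n = 3 ^ n := by
        rw [← mul_pow]; norm_num
      -- |H₀ r₁| ≤ C / (4^n r₁²) / (3/4)^n = C/r₁² * (1/3)^n
      have : |H₀ r₁| ≤ C / ((4 : ℝ) ^ n * r₁ ^ 2) / (3 / 4 : ℝ) ^ n :=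
        (le_div_iff₀ h34).2 (by rwa [mul_comm])
      calc |H₀ r₁| ≤ C / ((4 : ℝ) ^ n * r₁ ^ 2) / (3 / 4 : ℝ) ^ n := this
        _ = C / r₁ ^ 2 * (1 / 3 : ℝ) ^ n := by
            rw [div_div, mul_comm ((4:ℝ)^n) (r₁^2), mul_assoc, mul_comm ((4:ℝ)^n), key,
              div_pow, one_pow, div_mul_div_comm, mul_one]
    have htend : Tendsto (fun n : ℕ => C / r₁ ^ 2 * (1 / 3 : ℝ) ^ n) atTop (nhds 0) := by
      have := tendsto_pow_atTop_nhds_zero_of_lt_one (by norm_num : (0:ℝ) ≤ 1/3)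
        (by norm_num : (1/3 : ℝ) < 1)
      simpa using this.const_mul (C / r₁ ^ 2)
    have : |H₀ r₁| ≤ 0 := ge_of_tendsto htend (Eventually.of_forall hbound)
    linarith
  -- then: ∫_{Ioi r₁} H₀'² = 0 and H₀ r = H₀ r₁
  have hintzero : (∫ x in Set.Ioi r₁, (H₀' x) ^ 2) = 0 := by
    have h1 := hsmall r₁ le_rfl
    rw [hzero] at h1
    have h2 : (0 : ℝ) ≤ ∫ x in Set.Ioi r₁, (H₀' x) ^ 2 :=
      setIntegral_nonneg measurableSet_Ioi fun x _ => sq_nonneg _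
    nlinarith
  have := stmt9_key r₁ H₀ H₀' hderiv hint le_rfl hr
  rw [hintzero, Real.sqrt_zero, mul_zero, hzero, sub_zero] at this
  exact abs_nonpos_iff.1 this
end

section
/- Let α ∈ (−1, 0), and let w : [1/2, 1] → ℝ be C^1 with w(1) = w'(1) = 0, and suppose the derivative bound (1−r)^{α+1} |w'(r)| ≤ C ∫_r^1 (1−ρ)^α |w(ρ)| dρ holds for all r ∈ [1/2, 1]. Then there exists ε > 0 such that w ≡ 0 on [1−ε, 1]. -/
open Set MeasureTheory intervalIntegral

/-- Gronwall-type unique continuation: if `w` is `C¹` on `[1/2,1]` with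
`w(1) = w'(1) = 0` and `(1-r)^{α+1} |w'(r)| ≤ C ∫_r^1 (1-ρ)^α |w(ρ)| dρ` with
`α ∈ (-1,0)`, then `w ≡ 0` near `r = 1`. -/
theorem stmt_13 (α C : ℝ) (hα : α ∈ Set.Ioo (-1 : ℝ) 0) (hC : 0 ≤ C)
    (w w' : ℝ → ℝ)
    (hw : ∀ r ∈ Set.Icc (1 / 2 : ℝ) 1,
      HasDerivWithinAt w (w' r) (Set.Icc (1 / 2) 1) r)
    (hw'cont : ContinuousOn w' (Set.Icc (1 / 2) 1))
    (hw1 : w 1 = 0) (hw'1 : w' 1 = 0)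
    (hbound : ∀ r ∈ Set.Icc (1 / 2 : ℝ) 1,
      (1 - r) ^ (α + 1) * |w' r| ≤ C * ∫ ρ in r..1, (1 - ρ) ^ α * |w ρ|) :
    ∃ ε : ℝ, 0 < ε ∧ ∀ r ∈ Set.Icc (1 - ε) 1, w r = 0 := by
  obtain ⟨hα1, hα0⟩ := hα
  have hα1' : 0 < α + 1 := by linarith
  -- choose ε
  set ε : ℝ := min (1 / 2) ((α + 1) / (2 * (C + 1))) with hε_def
  have hεpos : 0 < ε := lt_min (by norm_num) (by positivity)
  have hε2 : ε ≤ 1 / 2 := min_le_left _ _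
  have hεq : C * ε / (α + 1) ≤ 1 / 2 := by
    have h1 : ε ≤ (α + 1) / (2 * (C + 1)) := min_le_right _ _
    have h4 : ε * (2 * (C + 1)) ≤ α + 1 := (le_div_iff₀ (by positivity)).mp h1
    rw [div_le_div_iff₀ hα1' (by norm_num : (0:ℝ) < 2)]
    nlinarith [mul_nonneg hC hεpos.le]
  set r0 : ℝ := 1 - ε with hr0_def
  have hr0half : (1 / 2 : ℝ) ≤ r0 := by simp only [hr0_def]; linarith
  have hr01 : r0 ≤ 1 := by simp only [hr0_def]; linarith
  have hsub : Set.Icc r0 1 ⊆ Set.Icc (1 / 2 : ℝ) 1 :=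
    Set.Icc_subset_Icc hr0half le_rfl
  -- continuity of w on Icc (1/2) 1
  have hwcont : ContinuousOn w (Set.Icc (1 / 2 : ℝ) 1) :=
    fun x hx => (hw x hx).continuousWithinAt
  -- maximum of |w| on [r0, 1]
  obtain ⟨sm, hsm, hmax⟩ := (isCompact_Icc (a := r0) (b := 1)).exists_isMaxOn
    ⟨1, Set.right_mem_Icc.2 hr01⟩
    ((hwcont.mono hsub).abs)
  set B : ℝ := |w sm| with hB_def
  have hBnonneg : 0 ≤ B := abs_nonneg _
  have hBle : ∀ y ∈ Set.Icc r0 1, |w y| ≤ B := fun y hy => hmax hy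
  -- integrability of (1-ρ)^α on intervals
  have hrpow_int : ∀ x : ℝ, IntervalIntegrable (fun ρ => (1 - ρ) ^ α) volume x 1 := by
    intro x
    have := (intervalIntegrable_rpow' (a := 1 - x) (b := 1 - 1) hα1).comp_sub_left 1
    simpa using this
  -- key integral computation: ∫_x^1 (1-ρ)^α = (1-x)^(α+1)/(α+1)
  have hint_eq : ∀ x : ℝ, x ≤ 1 →
      (∫ ρ in x..1, (1 - ρ) ^ α) = (1 - x) ^ (α + 1) / (α + 1) := by
    intro x hx
    rw [intervalIntegral.integral_comp_sub_left (fun t => t ^ α) 1]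
    rw [integral_rpow (Or.inl hα1)]
    rw [sub_self, Real.zero_rpow (by linarith)]
    ring
  -- main estimate: for x ∈ [r0, 1], ∫_x^1 (1-ρ)^α |w ρ| ≤ B * (1-x)^(α+1)/(α+1)
  have hint_le : ∀ x ∈ Set.Icc r0 1,
      (∫ ρ in x..1, (1 - ρ) ^ α * |w ρ|) ≤ B * ((1 - x) ^ (α + 1) / (α + 1)) := by
    intro x hx
    have hx1 : x ≤ 1 := hx.2
    have hint1 : IntervalIntegrable (fun ρ => (1 - ρ) ^ α * B) volume x 1 :=
      (hrpow_int x).mul_const B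
    -- integrability of the product
    have hmeas : AEStronglyMeasurable (fun ρ => (1 - ρ) ^ α * |w ρ|)
        (volume.restrict (Set.uIoc x 1)) := by
      rw [Set.uIoc_of_le hx1]
      apply AEStronglyMeasurable.mul
      · exact (hrpow_int x).aestronglyMeasurable
      · have : ContinuousOn (fun ρ => |w ρ|) (Set.Ioc x 1) := by
          apply ContinuousOn.abs
          apply hwcont.mono
          intro y hy
          exact ⟨le_trans (le_trans hr0half hx.1) (le_of_lt hy.1), hy.2⟩
        exact this.aestronglyMeasurable measurableSet_Ioc
    have hptwise : ∀ ρ ∈ Set.Icc x 1, (1 - ρ) ^ α * |w ρ| ≤ (1 - ρ) ^ α * B := by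
      intro ρ hρ
      apply mul_le_mul_of_nonneg_left
      · exact hBle ρ ⟨le_trans hx.1 hρ.1, hρ.2⟩
      · exact Real.rpow_nonneg (by linarith [hρ.2]) α
    have hintf : IntervalIntegrable (fun ρ => (1 - ρ) ^ α * |w ρ|) volume x 1 := by
      apply IntervalIntegrable.mono_fun' hint1 hmeas
      rw [Filter.EventuallyLE, ae_restrict_iff' measurableSet_uIoc]
      apply Filter.Eventually.of_forall
      intro ρ hρ
      rw [Set.uIoc_of_le hx1] at hρ
      have h1ρ : (0 : ℝ) ≤ 1 - ρ := by linarith [hρ.2]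
      have := hptwise ρ ⟨le_of_lt hρ.1, hρ.2⟩
      simp only [Real.norm_eq_abs]
      rw [abs_of_nonneg (mul_nonneg (Real.rpow_nonneg h1ρ α) (abs_nonneg _))]
      exact this
    calc (∫ ρ in x..1, (1 - ρ) ^ α * |w ρ|) ≤ ∫ ρ in x..1, (1 - ρ) ^ α * B :=
          intervalIntegral.integral_mono_on hx1 hintf hint1 hptwise
      _ = (∫ ρ in x..1, (1 - ρ) ^ α) * B := by
          rw [intervalIntegral.integral_mul_const]
      _ = B * ((1 - x) ^ (α + 1) / (α + 1)) := by rw [hint_eq x hx1]; ring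
  -- derivative bound on [r0, 1]
  set K : ℝ := C * B / (α + 1) with hK_def
  have hKnonneg : 0 ≤ K := by positivity
  have hderiv_bound : ∀ x ∈ Set.Icc r0 1, |w' x| ≤ K := by
    intro x hx
    rcases eq_or_lt_of_le hx.2 with h1 | h1
    · rw [h1, hw'1]; simpa using hKnonneg
    · have hxI : x ∈ Set.Icc (1 / 2 : ℝ) 1 := hsub hx
      have hpow_pos : 0 < (1 - x) ^ (α + 1) := Real.rpow_pos_of_pos (by linarith) _
      have h2 : (1 - x) ^ (α + 1) * |w' x| ≤ (1 - x) ^ (α + 1) * K := by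
        refine (hbound x hxI).trans ?_
        refine (mul_le_mul_of_nonneg_left (hint_le x hx) hC).trans (le_of_eq ?_)
        rw [hK_def]; ring
      exact (mul_le_mul_iff_right₀ hpow_pos).mp h2
  -- mean value: |w sm| ≤ K * (1 - sm)
  have hmvt : |w sm - w 1| ≤ K * |sm - 1| := by
    have := Convex.norm_image_sub_le_of_norm_hasDerivWithin_le
      (f := w) (f' := w') (s := Set.Icc r0 1)
      (fun x hx => (hw x (hsub hx)).mono hsub)
      (fun x hx => by simpa [Real.norm_eq_abs] using hderiv_bound x hx)
      (convex_Icc r0 1) (Set.right_mem_Icc.2 hr01) hsm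
    simpa [Real.norm_eq_abs] using this
  have hsm1 : |sm - 1| ≤ ε := by
    rw [abs_sub_le_iff]
    constructor <;> [linarith [hsm.2]; linarith [hsm.1]]
  have hBbound : B ≤ K * ε := by
    have : |w sm| ≤ K * |sm - 1| := by simpa [hw1] using hmvt
    exact le_trans this (mul_le_mul_of_nonneg_left hsm1 hKnonneg)
  have hB0 : B = 0 := by
    have h1 : K * ε = (C * ε / (α + 1)) * B := by rw [hK_def]; ring
    have h2 : (C * ε / (α + 1)) * B ≤ (1 / 2) * B :=
      mul_le_mul_of_nonneg_right hεq hBnonneg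
    have : B ≤ (1 / 2) * B := by rw [h1] at hBbound; linarith
    linarith
  exact ⟨ε, hεpos, fun r hr => abs_eq_zero.mp (le_antisymm (hB0 ▸ hBle r hr) (abs_nonneg _))⟩
end
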